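/- arXiv:1805.12406 — 2 statements merged into one kernel-verified Lean document; each statement's English description precedes it below -/
import Mathlib

section
/- Let ω_r > 0 and γ ∈ (−1, 1]. For every ω > 0, the describing-function magnitude of GFORE satisfies |G(ω)| ≥ ω_r/√(ω_r² + ω²), i.e., it is at least the magnitude of the base linear first-order low-pass filter at the same frequency, with equality for all ω if and only if γ = 1; the inequality is strict for every ω > 0 when γ < 1. -/
/-- Describing-function correction term of GFORE with corner frequency `ωr`
and reset parameter `γ`, at frequency `ω`. -/
noncomputable def Theta (ωr γ ω : ℝ) : ℝ :=
  (2 / Real.pi) * (1 + Real.exp (-Real.pi * ωr / ω)) *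
    ((1 - γ) / (1 + γ * Real.exp (-Real.pi * ωr / ω))) * (ω ^ 2 / (ωr ^ 2 + ω ^ 2))

/-- Describing function of GFORE at frequency `ω`. -/
noncomputable def GforeDF (ωr γ ω : ℝ) : ℂ :=
  (ωr : ℂ) * (1 + Complex.I * (Theta ωr γ ω : ℝ)) / ((ωr : ℂ) + Complex.I * (ω : ℝ))

/-!
Writing `G(ω) = ωr (1 + iΘ) / (ωr + iω)` gives `|G(ω)| = ωr √(1 + Θ²) / √(ωr² + ω²)`, so the
claims reduce to the sign of `Θ`. With `E = exp (-π ωr / ω) ∈ (0, 1)`, every factor of `Θ` is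
positive for `γ ∈ (-1, 1)` (note `1 + γE > 0` because `|γE| < 1`), while the factor `1 - γ`
vanishes at `γ = 1`.
-/

open Complex

theorem Theta_one (ωr ω : ℝ) : Theta ωr 1 ω = 0 := by
  simp [Theta]

theorem Theta_pos {ωr γ ω : ℝ} (hωr : 0 < ωr) (hγ : γ ∈ Set.Ioo (-1 : ℝ) 1) (hω : 0 < ω) :
    0 < Theta ωr γ ω := by
  obtain ⟨hγ₁, hγ₂⟩ := hγ
  set E := Real.exp (-Real.pi * ωr / ω)
  have hE₀ : 0 < E := Real.exp_pos _
  have hE₁ : E < 1 := Real.exp_lt_one_iff.mpr <| div_neg_of_neg_of_pos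
    (mul_neg_of_neg_of_pos (neg_neg_of_pos Real.pi_pos) hωr) hω
  have hden : 0 < 1 + γ * E := by nlinarith
  have hratio : 0 < (1 - γ) / (1 + γ * E) := div_pos (by linarith) hden
  unfold Theta
  positivity

theorem norm_mul_one_add_I_mul_div (a θ ω : ℝ) :
    ‖(a : ℂ) * (1 + I * θ) / (a + I * ω)‖ = |a| * √(1 + θ ^ 2) / √(a ^ 2 + ω ^ 2) := by
  rw [norm_div, norm_mul, norm_real, Real.norm_eq_abs, add_comm (a : ℂ), add_comm (1 : ℂ),
    mul_comm I, mul_comm I, add_comm, add_comm _ (a : ℂ), ← ofReal_one,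
    norm_add_mul_I, norm_add_mul_I, one_pow]

theorem norm_GforeDF (ωr γ ω : ℝ) :
    ‖GforeDF ωr γ ω‖ = |ωr| * √(1 + Theta ωr γ ω ^ 2) / √(ωr ^ 2 + ω ^ 2) :=
  norm_mul_one_add_I_mul_div _ _ _

theorem one_lt_sqrt_one_add_sq {θ : ℝ} (hθ : θ ≠ 0) : 1 < √(1 + θ ^ 2) := by
  rw [Real.lt_sqrt zero_le_one]
  nlinarith [sq_pos_of_ne_zero hθ]

/-- For `ωr > 0` and `γ ∈ (−1, 1]`, the GFORE describing-function magnitude is at least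
the magnitude `ωr/√(ωr² + ω²)` of the base linear low-pass filter at every `ω > 0`,
with equality for all `ω > 0` iff `γ = 1`, and the inequality is strict for every
`ω > 0` when `γ < 1`. -/
theorem gfore_gain_ge (ωr γ : ℝ) (hωr : 0 < ωr) (hγ : γ ∈ Set.Ioc (-1 : ℝ) 1) :
    (∀ ω : ℝ, 0 < ω →
      ωr / Real.sqrt (ωr ^ 2 + ω ^ 2) ≤ ‖GforeDF ωr γ ω‖) ∧
    ((∀ ω : ℝ, 0 < ω →
      ‖GforeDF ωr γ ω‖ = ωr / Real.sqrt (ωr ^ 2 + ω ^ 2)) ↔ γ = 1) ∧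
    (γ < 1 → ∀ ω : ℝ, 0 < ω →
      ωr / Real.sqrt (ωr ^ 2 + ω ^ 2) < ‖GforeDF ωr γ ω‖) := by
  obtain ⟨hγ₁, hγ₂⟩ := hγ
  have hstrict : γ < 1 → ∀ ω : ℝ, 0 < ω →
      ωr / √(ωr ^ 2 + ω ^ 2) < ‖GforeDF ωr γ ω‖ := by
    intro hγ ω hω
    have hΘ := Theta_pos hωr ⟨hγ₁, hγ⟩ hω
    rw [norm_GforeDF, abs_of_pos hωr, mul_div_right_comm]
    exact lt_mul_of_one_lt_right (by positivity) (one_lt_sqrt_one_add_sq hΘ.ne')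
  have hequal : γ = 1 → ∀ ω : ℝ, 0 < ω → ‖GforeDF ωr γ ω‖ = ωr / √(ωr ^ 2 + ω ^ 2) := by
    rintro rfl ω -
    simp [norm_GforeDF, Theta_one, abs_of_pos hωr]
  refine ⟨fun ω hω => ?_, ⟨fun h => ?_, hequal⟩, hstrict⟩
  · rcases hγ₂.lt_or_eq with hlt | heq
    · exact (hstrict hlt ω hω).le
    · exact (hequal heq ω hω).ge
  · by_contra hne
    exact (hstrict (hγ₂.lt_of_ne hne) 1 one_pos).ne' (h 1 one_pos)
end

section
/- Let ω_r > 0, ω_f > ω_r and γ ∈ (−1, 1]. For every ω > 0, the argument of the CgLp describing function satisfies arg D(ω) = arctan(Θ(ω)) − arctan(ω/ω_f). In particular, for γ < 1 this phase strictly exceeds at every frequency the phase −arctan(ω/ω_f) obtained in the linear case γ = 1, and arg D(ω) > 0 precisely when Θ(ω) > ω/ω_f. -/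
/-- Describing function of the CgLp element (GFORE in series with the linear lead
filter `(1 + iω/ωr)/(1 + iω/ωf)`) at frequency `ω`. -/
noncomputable def CgLpDF (ωr ωf γ ω : ℝ) : ℂ :=
  (1 + Complex.I * (Theta ωr γ ω : ℝ)) / (1 + Complex.I * ((ω / ωf : ℝ) : ℂ))

lemma arg_of_re_pos' {z : ℂ} (hz : 0 < z.re) :
    Complex.arg z = Real.arctan (z.im / z.re) := by
  have hne : z ≠ 0 := by
    intro h; rw [h] at hz; simp at hz
  have h1 : |Complex.arg z| < Real.pi / 2 :=
    Complex.abs_arg_lt_pi_div_two_iff.mpr (Or.inl hz)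
  rw [← Complex.tan_arg]
  exact (Real.arctan_tan (by linarith [abs_lt.mp h1 |>.1]) (abs_lt.mp h1 |>.2)).symm

lemma arg_key (a b : ℝ) (ha : 0 ≤ a) (hb : 0 ≤ b) :
    Complex.arg ((1 + Complex.I * (a : ℂ)) / (1 + Complex.I * (b : ℂ))) =
      Real.arctan a - Real.arctan b := by
  set z := (1 + Complex.I * (a : ℂ)) / (1 + Complex.I * (b : ℂ)) with hz
  have hab : 0 < 1 + a * b := by positivity
  have hb2 : 0 < 1 + b ^ 2 := by positivity
  have hre : z.re = (1 + a * b) / (1 + b ^ 2) := by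
    rw [hz, Complex.div_re]
    simp [Complex.normSq_apply]
    ring
  have him : z.im = (a - b) / (1 + b ^ 2) := by
    rw [hz, Complex.div_im]
    simp [Complex.normSq_apply]
    ring
  have hrepos : 0 < z.re := by rw [hre]; positivity
  rw [arg_of_re_pos' hrepos, hre, him]
  have : (a - b) / (1 + b ^ 2) / ((1 + a * b) / (1 + b ^ 2)) = (a - b) / (1 + a * b) := by
    field_simp
  rw [this]
  have h1 : a * (-b) < 1 := by nlinarith
  have := Real.arctan_add h1
  rw [Real.arctan_neg] at this
  have h2 : (a - b) / (1 + a * b) = (a + -b) / (1 - a * -b) := by ring_nf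
  rw [h2, ← this]; ring

lemma theta_nonneg (ωr γ ω : ℝ) (hωr : 0 < ωr) (hγ : γ ∈ Set.Ioc (-1 : ℝ) 1) (hω : 0 < ω) :
    0 ≤ Theta ωr γ ω := by
  obtain ⟨hγ1, hγ2⟩ := hγ
  unfold Theta
  set E := Real.exp (-Real.pi * ωr / ω) with hE
  have hE0 : 0 < E := Real.exp_pos _
  have hE1 : E < 1 := by
    rw [hE]
    apply Real.exp_lt_one_iff.mpr
    have := Real.pi_pos
    rw [neg_mul]
    apply div_neg_of_neg_of_pos (by nlinarith) hω
  have hden : 0 < 1 + γ * E := by nlinarith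
  have := Real.pi_pos
  have h1 : 0 ≤ 1 - γ := by linarith
  positivity

lemma theta_pos (ωr γ ω : ℝ) (hωr : 0 < ωr) (hγ1 : -1 < γ) (hγ2 : γ < 1) (hω : 0 < ω) :
    0 < Theta ωr γ ω := by
  unfold Theta
  set E := Real.exp (-Real.pi * ωr / ω) with hE
  have hE0 : 0 < E := Real.exp_pos _
  have hE1 : E < 1 := by
    rw [hE]
    apply Real.exp_lt_one_iff.mpr
    have := Real.pi_pos
    rw [neg_mul]
    apply div_neg_of_neg_of_pos (by nlinarith) hω
  have hden : 0 < 1 + γ * E := by nlinarith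
  have := Real.pi_pos
  have h1 : 0 < 1 - γ := by linarith
  positivity

/-- For `ωr > 0`, `ωf > ωr` and `γ ∈ (−1, 1]`, the argument of the CgLp describing
function is `arctan (Θ(ω)) − arctan (ω/ωf)` at every `ω > 0`; for `γ < 1` this phase
strictly exceeds the linear-case phase `−arctan (ω/ωf)`, and it is positive exactly
when `Θ(ω) > ω/ωf`. -/
theorem cglp_arg (ωr ωf γ : ℝ) (hωr : 0 < ωr) (hωf : ωr < ωf)
    (hγ : γ ∈ Set.Ioc (-1 : ℝ) 1) :
    (∀ ω : ℝ, 0 < ω →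
      Complex.arg (CgLpDF ωr ωf γ ω) =
        Real.arctan (Theta ωr γ ω) - Real.arctan (ω / ωf)) ∧
    (γ < 1 → ∀ ω : ℝ, 0 < ω →
      Complex.arg (CgLpDF ωr ωf γ ω) > -Real.arctan (ω / ωf)) ∧
    (∀ ω : ℝ, 0 < ω →
      (0 < Complex.arg (CgLpDF ωr ωf γ ω) ↔ ω / ωf < Theta ωr γ ω)) := by
  have hωfpos : 0 < ωf := lt_trans hωr hωf
  have key : ∀ ω : ℝ, 0 < ω →
      Complex.arg (CgLpDF ωr ωf γ ω) =
        Real.arctan (Theta ωr γ ω) - Real.arctan (ω / ωf) := by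
    intro ω hω
    exact arg_key _ _ (theta_nonneg ωr γ ω hωr hγ hω) (by positivity)
  refine ⟨key, ?_, ?_⟩
  · intro hγ2 ω hω
    rw [key ω hω]
    have h := Real.arctan_strictMono (theta_pos ωr γ ω hωr hγ.1 hγ2 hω)
    rw [Real.arctan_zero] at h
    linarith
  · intro ω hω
    rw [key ω hω, sub_pos]
    exact ⟨fun h => Real.arctan_strictMono.lt_iff_lt.mp h,
      fun h => Real.arctan_strictMono h⟩
end
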